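/- arXiv:2212.07374 — 2 statements merged into one kernel-verified Lean document; each statement's English description precedes it below -/
import Mathlib

section
/- For 0 < q < 1 and α, β > 0, the fractional q-integrals with lower limit 0 satisfy the semigroup property (I^α_{q,0+} I^β_{q,0+} f)(x) = (I^{α+β}_{q,0+} f)(x) for every f continuous on [0,b] and x ∈ (0,b]. -/
noncomputable section
open Real

/-- q-bracket [α]_q = (1-q^α)/(1-q) (real exponent). -/
def qBracket (q α : ℝ) : ℝ := (1 - q ^ α) / (1 - q)

/-- infinite q-Pochhammer (a;q)_∞ = ∏_{k=0}^∞ (1 - q^k a). -/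
def qPochInf (q a : ℝ) : ℝ := ∏' k : ℕ, (1 - q ^ k * a)

/-- (a;q)_α = (a;q)_∞ / (q^α a;q)_∞. -/
def qPoch (q a α : ℝ) : ℝ := qPochInf q a / qPochInf q (q ^ α * a)

/-- q-Gamma function. -/
def qGamma (q x : ℝ) : ℝ := qPochInf q q / qPochInf q (q ^ x) * (1 - q) ^ (1 - x)

/-- Jackson q-integral ∫₀^a f(x) d_q x. -/
def jackson (q a : ℝ) (f : ℝ → ℝ) : ℝ := (1 - q) * a * ∑' m : ℕ, q ^ m * f (a * q ^ m)

/-- Jackson q-derivative. -/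
def Dq (q : ℝ) (f : ℝ → ℝ) (x : ℝ) : ℝ := (f x - f (q * x)) / (x * (1 - q))

/-- Riemann–Liouville fractional q-integral of order α with lower limit 0 (I⁰ = id). -/
def Iq (q α : ℝ) (f : ℝ → ℝ) (x : ℝ) : ℝ :=
  if α = 0 then f x
  else x ^ (α - 1) / qGamma q α * jackson q x (fun t => qPoch q (q * t / x) (α - 1) * f t)

/-- Riemann–Liouville fractional q-derivative D^α = D_q^{⌈α⌉} I^{⌈α⌉-α}. -/
def DqRL (q α : ℝ) (f : ℝ → ℝ) (x : ℝ) : ℝ :=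
  (fun g => Dq q g)^[⌈α⌉₊] (fun y => Iq q ((⌈α⌉₊ : ℝ) - α) f y) x

/-- bi-ordinal Hilfer fractional q-derivative of orders α,β and type μ. -/
def DbiHilfer (q α β μ : ℝ) (f : ℝ → ℝ) (x : ℝ) : ℝ :=
  Iq q (μ * (1 - α)) (fun y => Dq q (fun z => Iq q ((1 - μ) * (1 - β)) f z) y) x

/-- membership in L¹_q[0,b] : the defining Jackson series converges absolutely. -/
def MemL1q (q b : ℝ) (f : ℝ → ℝ) : Prop := Summable (fun m : ℕ => q ^ m * |f (b * q ^ m)|)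

/-- the L¹_q[0,b] norm. -/
def L1qNorm (q b : ℝ) (f : ℝ → ℝ) : ℝ := (1 - q) * b * ∑' m : ℕ, q ^ m * |f (b * q ^ m)|

/-!
For `γ > 0` the Jackson sum defining `I^γ f (x)` is `(x(1-q))^γ ∑ₘ u_m(q^γ) q^m f(x q^m)`, where
`u_m(a) = (a;q)_m / (q;q)_m` are the `q`-binomial coefficients. Composing two such series gives the
double series `∑ₘ ∑ₙ (q^β)^m u_m(q^α) u_n(q^β) q^{m+n} f(x q^{m+n})`, absolutely convergent because
`0 ≤ u_m(a) ≤ 1/(q;q)_∞` and `f` is bounded on `[0, x]`. Summing along the diagonals `m + n = k` and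
applying the `q`-Vandermonde identity `∑_{m+n=k} b^m u_m(a) u_n(b) = u_k(ab)` collapses it to the
series of `I^{α+β} f (x)`.

The `q`-Vandermonde identity is the coefficientwise form of `U_a(bX) U_b(X) = U_{ab}(X)` for
`U_a = ∑ u_m(a) X^m`: both sides are the unique power series with constant term `1` solving
`(1 - X) F(X) = (1 - cX) F(qX)` with `c = ab`.
-/

open Finset PowerSeries

def qPochFin (q a : ℝ) (n : ℕ) : ℝ := ∏ i ∈ range n, (1 - q ^ i * a)

def qBinomCoeff (q a : ℝ) (n : ℕ) : ℝ := qPochFin q a n / qPochFin q q n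

def qBinomSeries (q a : ℝ) : PowerSeries ℝ := PowerSeries.mk (qBinomCoeff q a)

section qBinomSeries

variable {q : ℝ}

lemma qBinomCoeff_zero (a : ℝ) : qBinomCoeff q a 0 = 1 := by
  simp [qBinomCoeff, qPochFin]

lemma qBinomCoeff_succ_mul (a : ℝ) {n : ℕ} (hq : q ^ (n + 1) ≠ 1) :
    (1 - q ^ (n + 1)) * qBinomCoeff q a (n + 1) = (1 - q ^ n * a) * qBinomCoeff q a n := by
  have hq' : 1 - q ^ n * q ≠ 0 := by rw [← pow_succ]; exact sub_ne_zero.mpr hq.symm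
  unfold qBinomCoeff qPochFin
  rw [prod_range_succ, prod_range_succ, ← pow_succ]
  generalize ∏ i ∈ range n, (1 - q ^ i * a) = A
  generalize ∏ i ∈ range n, (1 - q ^ i * q) = B
  field_simp

lemma coeff_succ_one_sub_C_mul_X_mul_rescale (c : ℝ) (F : PowerSeries ℝ) (n : ℕ) :
    coeff (n + 1) ((1 - C c * X) * rescale q F)
      = q ^ (n + 1) * coeff (n + 1) F - c * (q ^ n * coeff n F) := by
  rw [sub_mul, one_mul, map_sub, mul_assoc, coeff_C_mul, coeff_succ_X_mul, coeff_rescale,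
    coeff_rescale]

lemma one_sub_X_mul_eq_iff (c : ℝ) (F : PowerSeries ℝ) :
    (1 - X) * F = (1 - C c * X) * rescale q F ↔
      ∀ n : ℕ, (1 - q ^ (n + 1)) * coeff (n + 1) F = (1 - q ^ n * c) * coeff n F := by
  have hsucc (n : ℕ) : coeff (n + 1) ((1 - X) * F) = coeff (n + 1) F - coeff n F := by
    rw [sub_mul, one_mul, map_sub, coeff_succ_X_mul]
  constructor
  · intro h n
    have := congrArg (coeff (n + 1)) h
    rw [hsucc, coeff_succ_one_sub_C_mul_X_mul_rescale] at this
    linear_combination this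
  · intro h
    ext n
    cases n with
    | zero =>
      have h0 := coeff_rescale F q 0
      rw [pow_zero, one_mul, coeff_zero_eq_constantCoeff_apply,
        coeff_zero_eq_constantCoeff_apply] at h0
      simp [h0]
    | succ n =>
      rw [hsucc, coeff_succ_one_sub_C_mul_X_mul_rescale]
      linear_combination h n

lemma one_sub_X_mul_qBinomSeries (hq : ∀ n : ℕ, q ^ (n + 1) ≠ 1) (a : ℝ) :
    (1 - X) * qBinomSeries q a = (1 - C a * X) * rescale q (qBinomSeries q a) :=
  (one_sub_X_mul_eq_iff a _).mpr fun n => by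
    simpa [qBinomSeries] using qBinomCoeff_succ_mul a (hq n)

lemma eq_qBinomSeries_of_one_sub_X_mul_eq (hq : ∀ n : ℕ, q ^ (n + 1) ≠ 1) {c : ℝ}
    {F : PowerSeries ℝ} (h0 : coeff 0 F = 1) (h : (1 - X) * F = (1 - C c * X) * rescale q F) : F = qBinomSeries q c := by
  rw [one_sub_X_mul_eq_iff] at h
  ext n
  induction n with
  | zero => simpa [qBinomSeries, qBinomCoeff_zero] using h0
  | succ n ih =>
    have hn : 1 - q ^ (n + 1) ≠ 0 := sub_ne_zero.mpr (hq n).symm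
    refine mul_left_cancel₀ hn ?_
    rw [h, ih]
    simpa [qBinomSeries] using (qBinomCoeff_succ_mul c (hq n)).symm

lemma rescale_qBinomSeries_mul_qBinomSeries (hq : ∀ n : ℕ, q ^ (n + 1) ≠ 1) (a b : ℝ) :
    rescale b (qBinomSeries q a) * qBinomSeries q b = qBinomSeries q (a * b) := by
  apply eq_qBinomSeries_of_one_sub_X_mul_eq hq
  · simp [coeff_mul, coeff_rescale, qBinomSeries, qBinomCoeff_zero]
  · have hb : (1 - C b * X : PowerSeries ℝ) ≠ 0 := fun h => by
      simpa using congrArg constantCoeff h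
    refine mul_left_cancel₀ hb ?_
    have hC : rescale b (C a) = C a := by
      ext n; cases n <;> simp [coeff_rescale, coeff_C]
    have ha := congrArg (rescale b) (one_sub_X_mul_qBinomSeries hq a)
    rw [map_mul, map_mul, rescale_rescale, map_sub, map_sub, map_one, map_mul, rescale_X, hC,
      ← mul_assoc, ← map_mul] at ha
    calc (1 - C b * X) * ((1 - X) * (rescale b (qBinomSeries q a) * qBinomSeries q b))
        = ((1 - C b * X) * rescale b (qBinomSeries q a)) * ((1 - X) * qBinomSeries q b) := by
          ring
      _ = ((1 - C (a * b) * X) * rescale (q * b) (qBinomSeries q a))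
            * ((1 - C b * X) * rescale q (qBinomSeries q b)) := by
          rw [ha, one_sub_X_mul_qBinomSeries hq b]
      _ = (1 - C b * X) * ((1 - C (a * b) * X)
            * rescale q (rescale b (qBinomSeries q a) * qBinomSeries q b)) := by
          rw [map_mul (rescale q), rescale_rescale, mul_comm b q]; ring

lemma sum_antidiagonal_qBinomCoeff (hq : ∀ n : ℕ, q ^ (n + 1) ≠ 1) (a b : ℝ) (n : ℕ) :
    ∑ p ∈ antidiagonal n, b ^ p.1 * qBinomCoeff q a p.1 * qBinomCoeff q b p.2
      = qBinomCoeff q (a * b) n := by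
  have := congrArg (coeff n) (rescale_qBinomSeries_mul_qBinomSeries hq a b)
  simpa [coeff_mul, qBinomSeries, coeff_rescale] using this

end qBinomSeries

section qPochhammer

variable {q : ℝ}

lemma one_sub_pow_mul_pos (hq0 : 0 ≤ q) (hq1 : q ≤ 1) {a : ℝ} (ha : a < 1) (k : ℕ) :
    0 < 1 - q ^ k * a := by
  have h0 : 0 ≤ q ^ k := pow_nonneg hq0 k
  have h1 : q ^ k ≤ 1 := pow_le_one₀ hq0 hq1
  rcases le_or_gt a 0 with ha0 | ha0 <;> nlinarith

lemma one_sub_pow_mul_le_one (hq0 : 0 ≤ q) {a : ℝ} (ha : 0 ≤ a) (k : ℕ) : 1 - q ^ k * a ≤ 1 := by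
  have : 0 ≤ q ^ k * a := by positivity
  linarith

lemma qPochFin_pos (hq0 : 0 ≤ q) (hq1 : q ≤ 1) {a : ℝ} (ha : a < 1) (n : ℕ) :
    0 < qPochFin q a n :=
  prod_pos fun k _ => one_sub_pow_mul_pos hq0 hq1 ha k

lemma qPochFin_le_one (hq0 : 0 ≤ q) (hq1 : q ≤ 1) {a : ℝ} (ha0 : 0 ≤ a) (ha1 : a < 1) (n : ℕ) :
    qPochFin q a n ≤ 1 :=
  prod_le_one (fun k _ => (one_sub_pow_mul_pos hq0 hq1 ha1 k).le)
    fun k _ => one_sub_pow_mul_le_one hq0 ha0 k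

lemma summable_norm_neg_pow_mul (hq0 : 0 ≤ q) (hq1 : q < 1) (a : ℝ) :
    Summable fun k : ℕ => ‖-(q ^ k * a)‖ := by
  simpa [abs_mul, abs_of_nonneg hq0] using (summable_geometric_of_lt_one hq0 hq1).mul_right |a|

lemma multipliable_one_sub_pow_mul (hq0 : 0 ≤ q) (hq1 : q < 1) (a : ℝ) :
    Multipliable fun k : ℕ => 1 - q ^ k * a := by
  simpa [sub_eq_add_neg] using
    multipliable_one_add_of_summable (summable_norm_neg_pow_mul hq0 hq1 a)

lemma qPochInf_eq_qPochFin_mul (hq0 : 0 ≤ q) (hq1 : q < 1) (a : ℝ) (n : ℕ) :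
    qPochInf q a = qPochFin q a n * qPochInf q (q ^ n * a) := by
  have hshift : Multipliable fun k : ℕ => 1 - q ^ (k + n) * a := by
    simpa [pow_add, mul_assoc] using multipliable_one_sub_pow_mul hq0 hq1 (q ^ n * a)
  rw [qPochInf, qPochFin, qPochInf,
    ← Multipliable.prod_mul_tprod_nat_mul' (f := fun k => 1 - q ^ k * a) (k := n) hshift]
  simp only [pow_add, mul_assoc]

lemma qPochInf_pos (hq0 : 0 ≤ q) (hq1 : q < 1) {a : ℝ} (ha : a < 1) : 0 < qPochInf q a := by
  have hpos := one_sub_pow_mul_pos hq0 hq1.le ha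
  have hne : qPochInf q a ≠ 0 := by
    simpa [qPochInf, sub_eq_add_neg] using tprod_one_add_ne_zero_of_summable
      (fun k => by simpa [← sub_eq_add_neg] using (hpos k).ne')
      (summable_norm_neg_pow_mul hq0 hq1 a)
  exact (tprod_nonneg fun k => (hpos k).le).lt_of_ne' hne

lemma qPochInf_le_qPochFin (hq0 : 0 ≤ q) (hq1 : q < 1) {a : ℝ} (ha0 : 0 ≤ a) (ha1 : a < 1)
    (n : ℕ) : qPochInf q a ≤ qPochFin q a n := by
  refine Antitone.le_of_tendsto (antitone_nat_of_succ_le fun k => ?_)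
    (multipliable_one_sub_pow_mul hq0 hq1 a).hasProd.tendsto_prod_nat n
  rw [prod_range_succ]
  exact mul_le_of_le_one_right (qPochFin_pos hq0 hq1.le ha1 k).le (one_sub_pow_mul_le_one hq0 ha0 k)

end qPochhammer

section qBinomCoeff

variable {q : ℝ}

lemma abs_qBinomCoeff_le (hq0 : 0 ≤ q) (hq1 : q < 1) {a : ℝ} (ha0 : 0 ≤ a) (ha1 : a < 1)
    (n : ℕ) : |qBinomCoeff q a n| ≤ (qPochInf q q)⁻¹ := by
  have hnum := qPochFin_pos hq0 hq1.le ha1 n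
  have hden := qPochFin_pos hq0 hq1.le hq1 n
  rw [qBinomCoeff, abs_of_pos (div_pos hnum hden), ← one_div]
  exact div_le_div₀ zero_le_one (qPochFin_le_one hq0 hq1.le ha0 ha1 n) (qPochInf_pos hq0 hq1 hq1)
    (qPochInf_le_qPochFin hq0 hq1 hq0 hq1 n)

lemma qPoch_pow_succ (hq0 : 0 < q) (hq1 : q < 1) {γ : ℝ} (hγ : 0 < γ) (m : ℕ) :
    qPoch q (q ^ (m + 1)) (γ - 1)
      = qPochInf q q / qPochInf q (q ^ γ) * qBinomCoeff q (q ^ γ) m := by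
  have hqγ : q ^ γ < 1 := rpow_lt_one hq0.le hq1 hγ
  have hexp : q ^ (γ - 1) * q ^ (m + 1) = q ^ m * q ^ γ := by
    rw [rpow_sub_one hq0.ne', pow_succ]
    field_simp
  have hFq := (qPochFin_pos hq0.le hq1.le hq1 m).ne'
  have hFγ := (qPochFin_pos hq0.le hq1.le hqγ m).ne'
  rw [qPoch, hexp, pow_succ, qPochInf_eq_qPochFin_mul hq0.le hq1 q m,
    qPochInf_eq_qPochFin_mul hq0.le hq1 (q ^ γ) m, qBinomCoeff]
  field_simp

end qBinomCoeff

lemma Iq_eq_tsum {q γ x : ℝ} (hq0 : 0 < q) (hq1 : q < 1) (hγ : 0 < γ) (f : ℝ → ℝ) (hx : 0 < x) :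
    Iq q γ f x
      = (x * (1 - q)) ^ γ * ∑' m : ℕ, qBinomCoeff q (q ^ γ) m * (q ^ m * f (x * q ^ m)) := by
  have h1q : 0 < 1 - q := sub_pos.mpr hq1
  have hterm (m : ℕ) : q ^ m * (qPoch q (q * (x * q ^ m) / x) (γ - 1) * f (x * q ^ m))
      = qPochInf q q / qPochInf q (q ^ γ)
          * (qBinomCoeff q (q ^ γ) m * (q ^ m * f (x * q ^ m))) := by
    rw [show q * (x * q ^ m) / x = q ^ (m + 1) by field_simp; ring, qPoch_pow_succ hq0 hq1 hγ m]
    ring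
  have hA := (qPochInf_pos hq0.le hq1 hq1).ne'
  have hB := (qPochInf_pos hq0.le hq1 (rpow_lt_one hq0.le hq1 hγ)).ne'
  rw [Iq, if_neg hγ.ne', jackson, qGamma, tsum_congr hterm, tsum_mul_left,
    mul_rpow hx.le h1q.le, rpow_sub_one hx.ne', rpow_sub h1q, rpow_one]
  field_simp

lemma tsum_tsum_eq_tsum_sum_antidiagonal {E : Type*} [NormedAddCommGroup E] [CompleteSpace E]
    {F : ℕ × ℕ → E} (hF : Summable F) :
    ∑' m, ∑' n, F (m, n) = ∑' k, ∑ p ∈ antidiagonal k, F p := by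
  have hsigma := (HasAntidiagonal.sigmaAntidiagonalEquivProd.summable_iff.mpr hF).tsum_sigma
  rw [← hF.tsum_prod, ← HasAntidiagonal.sigmaAntidiagonalEquivProd.tsum_eq F]
  refine hsigma.trans (tsum_congr fun k => ?_)
  rw [tsum_fintype]
  exact sum_coe_sort (antidiagonal k) F

lemma summable_qBinomCoeff_mul_qBinomCoeff {q : ℝ} (hq0 : 0 ≤ q) (hq1 : q < 1) {a b c : ℝ}
    (ha0 : 0 ≤ a) (ha1 : a < 1) (hb0 : 0 ≤ b) (hb1 : b < 1) (hc : |c| ≤ 1) {g : ℕ → ℝ} {M : ℝ}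
    (hg : ∀ k, |g k| ≤ M) :
    Summable fun p : ℕ × ℕ =>
      c ^ p.1 * qBinomCoeff q a p.1 * qBinomCoeff q b p.2 * (q ^ (p.1 + p.2) * g (p.1 + p.2)) := by
  have hgeo := summable_geometric_of_lt_one hq0 hq1
  refine Summable.of_norm_bounded
    (((hgeo.mul_of_nonneg hgeo (fun k => pow_nonneg hq0 k) fun k => pow_nonneg hq0 k).mul_left
      ((qPochInf q q)⁻¹ * (qPochInf q q)⁻¹ * M))) fun ⟨m, n⟩ => ?_
  have hcm : |c ^ m| ≤ 1 := by rw [abs_pow]; exact pow_le_one₀ (abs_nonneg c) hc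
  have hA : 0 ≤ (qPochInf q q)⁻¹ := (inv_pos.mpr (qPochInf_pos hq0 hq1 hq1)).le
  have ham := abs_qBinomCoeff_le hq0 hq1 ha0 ha1 m
  have hbn := abs_qBinomCoeff_le hq0 hq1 hb0 hb1 n
  rw [Real.norm_eq_abs, abs_mul, abs_mul, abs_mul, abs_mul, abs_of_nonneg (pow_nonneg hq0 _),
    pow_add]
  calc |c ^ m| * |qBinomCoeff q a m| * |qBinomCoeff q b n| * (q ^ m * q ^ n * |g (m + n)|)
      ≤ 1 * (qPochInf q q)⁻¹ * (qPochInf q q)⁻¹ * (q ^ m * q ^ n * M) := by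
        gcongr
        exact hg _
    _ = _ := by ring

theorem Iq_Iq_eq_of_bounded {q α β x : ℝ} (hq0 : 0 < q) (hq1 : q < 1) (hα : 0 < α) (hβ : 0 < β)
    (hx : 0 < x) {f : ℝ → ℝ} {M : ℝ} (hM : ∀ k : ℕ, |f (x * q ^ k)| ≤ M) :
    Iq q α (fun y => Iq q β f y) x = Iq q (α + β) f x := by
  have hq : ∀ n : ℕ, q ^ (n + 1) ≠ 1 := fun n => (pow_lt_one₀ hq0.le hq1 n.succ_ne_zero).ne
  have h1q : 0 < 1 - q := sub_pos.mpr hq1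
  have hqα := rpow_lt_one hq0.le hq1 hα
  have hqβ := rpow_lt_one hq0.le hq1 hβ
  set T : ℕ × ℕ → ℝ := fun p => (q ^ β) ^ p.1 * qBinomCoeff q (q ^ α) p.1
    * qBinomCoeff q (q ^ β) p.2 * (q ^ (p.1 + p.2) * f (x * q ^ (p.1 + p.2))) with hT_def
  have hT : Summable T := summable_qBinomCoeff_mul_qBinomCoeff hq0.le hq1
    (rpow_nonneg hq0.le α) hqα (rpow_nonneg hq0.le β) hqβ
    (by rw [abs_of_nonneg (rpow_nonneg hq0.le β)]; exact hqβ.le) hM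
  have hinner (m : ℕ) : qBinomCoeff q (q ^ α) m * (q ^ m * Iq q β f (x * q ^ m))
      = (x * (1 - q)) ^ β * ∑' n, T (m, n) := by
    have hscale : (x * q ^ m * (1 - q)) ^ β = (x * (1 - q)) ^ β * (q ^ β) ^ m := by
      rw [mul_right_comm, mul_rpow (by positivity) (pow_nonneg hq0.le m),
        rpow_pow_comm hq0.le]
    have hrow : ∑' n, T (m, n) = (q ^ β) ^ m * qBinomCoeff q (q ^ α) m * q ^ m
        * ∑' n, qBinomCoeff q (q ^ β) n * (q ^ n * f (x * q ^ m * q ^ n)) := by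
      rw [← tsum_mul_left]
      refine tsum_congr fun n => ?_
      simp only [hT_def, pow_add, mul_assoc]
      ring
    rw [Iq_eq_tsum hq0 hq1 hβ f (by positivity), hscale, hrow]
    ring
  have hdiag (k : ℕ) :
      ∑ p ∈ antidiagonal k, T p = qBinomCoeff q (q ^ (α + β)) k * (q ^ k * f (x * q ^ k)) := by
    rw [rpow_add hq0, ← sum_antidiagonal_qBinomCoeff hq, sum_mul]
    refine sum_congr rfl fun p hp => ?_
    simp only [hT_def, mem_antidiagonal.mp hp]
  rw [Iq_eq_tsum hq0 hq1 hα _ hx, Iq_eq_tsum hq0 hq1 (add_pos hα hβ) f hx, tsum_congr hinner,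
    tsum_mul_left, tsum_tsum_eq_tsum_sum_antidiagonal hT, tsum_congr hdiag,
    rpow_add (mul_pos hx h1q)]
  ring

theorem Iq_semigroup_general (q α β b x : ℝ) (f : ℝ → ℝ) (hq0 : 0 < q) (hq1 : q < 1)
    (hα : 0 < α) (hβ : 0 < β) (hf : ContinuousOn f (Set.Icc 0 b))
    (hx : 0 < x) (hxb : x ≤ b) :
    Iq q α (fun y => Iq q β f y) x = Iq q (α + β) f x := by
  obtain ⟨M, hM⟩ := isCompact_Icc.exists_bound_of_continuousOn hf
  refine Iq_Iq_eq_of_bounded hq0 hq1 hα hβ hx fun k => hM _ ⟨by positivity, ?_⟩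
  exact (mul_le_of_le_one_right hx.le (pow_le_one₀ hq0.le hq1.le)).trans hxb

theorem Iq_semigroup (q α β b x : ℝ) (f : ℝ → ℝ) (hq0 : 0 < q) (hq1 : q < 1)
    (hα : 0 < α) (hβ : 0 < β) (hb : 0 < b) (hf : ContinuousOn f (Set.Icc 0 b))
    (hx : 0 < x) (hxb : x ≤ b) :
    Iq q α (fun y => Iq q β f y) x = Iq q (α + β) f x :=
  Iq_semigroup_general q α β b x f hq0 hq1 hα hβ hf hx hxb
end
end

section
/- Let 0 < q < 1, 0 < α, β ≤ 1, 0 ≤ μ ≤ 1, γ = β + μ(1-β), ν = β + μ(α-β) with γ ≤ 1. Then D^{(α,β)μ}_{q,0+} annihilates the power function x^{γ-1}: (D^{(α,β)μ}_{q,0+} t^{γ-1})(x) = 0 for all x > 0. -/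
noncomputable section
open Real

lemma Iq_inner_const (q γ : ℝ) (hq0 : 0 < q) (hγ1 : γ < 1)
    {y : ℝ} (hy : 0 < y) :
    Iq q (1 - γ) (fun t => t ^ (γ - 1)) y =
      (1 - q) / qGamma q (1 - γ) *
        ∑' m : ℕ, q ^ m * (qPoch q (q ^ (m + 1)) (1 - γ - 1) * ((q : ℝ) ^ m) ^ (γ - 1)) := by
  have hne : (1 : ℝ) - γ ≠ 0 := by linarith
  simp only [Iq, if_neg hne, jackson]
  have h2 : (fun m : ℕ => q ^ m * (qPoch q (q * (y * q ^ m) / y) (1 - γ - 1) * (y * q ^ m) ^ (γ - 1)))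
      = fun m : ℕ => y ^ (γ - 1) * (q ^ m * (qPoch q (q ^ (m + 1)) (1 - γ - 1) * ((q : ℝ) ^ m) ^ (γ - 1))) := by
    funext m
    have hq : q * (y * q ^ m) / y = q ^ (m + 1) := by
      field_simp
      ring
    rw [hq, Real.mul_rpow hy.le (pow_nonneg hq0.le m)]
    ring
  rw [h2, tsum_mul_left]
  have hy1 : y ^ (1 - γ - 1) * (y * y ^ (γ - 1)) = 1 := by
    rw [show y * y ^ (γ - 1) = y ^ (1:ℝ) * y ^ (γ - 1) by rw [Real.rpow_one],
      ← Real.rpow_add hy, ← Real.rpow_add hy]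
    norm_num
  calc y ^ (1 - γ - 1) / qGamma q (1 - γ) *
        ((1 - q) * y * (y ^ (γ - 1) *
          ∑' m : ℕ, q ^ m * (qPoch q (q ^ (m + 1)) (1 - γ - 1) * ((q : ℝ) ^ m) ^ (γ - 1))))
      = (y ^ (1 - γ - 1) * (y * y ^ (γ - 1))) * ((1 - q) / qGamma q (1 - γ) *
          ∑' m : ℕ, q ^ m * (qPoch q (q ^ (m + 1)) (1 - γ - 1) * ((q : ℝ) ^ m) ^ (γ - 1))) := by
        ring
    _ = _ := by rw [hy1, one_mul]

lemma Iq_zero (q σ x : ℝ) (f : ℝ → ℝ) (hx : f x = 0)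
    (h : ∀ m : ℕ, f (x * q ^ m) = 0) : Iq q σ f x = 0 := by
  by_cases hσ : σ = 0
  · simp [Iq, hσ, hx]
  · simp only [Iq, if_neg hσ, jackson]
    have h0 : ∑' m : ℕ, q ^ m * (qPoch q (q * (x * q ^ m) / x) (σ - 1) * f (x * q ^ m)) = 0 := by
      convert tsum_zero with m
      rw [h m]
      ring
    rw [h0]
    ring

theorem DbiHilfer_pow_zero (q α β μ x : ℝ)
    (hq0 : 0 < q) (hq1 : q < 1)
    (hα0 : 0 < α) (hα1 : α ≤ 1) (hβ0 : 0 < β) (hβ1 : β ≤ 1)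
    (hμ0 : 0 ≤ μ) (hμ1 : μ ≤ 1)
    (hγ : β + μ * (1 - β) ≤ 1) (hx : 0 < x) :
    DbiHilfer q α β μ (fun t => t ^ (β + μ * (1 - β) - 1)) x = 0 := by
  set γ := β + μ * (1 - β) with hγdef
  have hγeq : (1 - μ) * (1 - β) = 1 - γ := by rw [hγdef]; ring
  have hinner : ∀ y : ℝ, 0 < y →
      Dq q (fun z => Iq q ((1 - μ) * (1 - β)) (fun t => t ^ (γ - 1)) z) y = 0 := by
    intro y hy
    rcases eq_or_lt_of_le hγ with h1 | h1
    · have hσ : (1 - μ) * (1 - β) = 0 := by rw [hγeq]; linarith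
      have hγ1 : γ - 1 = 0 := by linarith
      simp only [Dq, Iq, if_pos hσ, hγ1, Real.rpow_zero, sub_self, zero_div]
    · simp only [Dq, hγeq]
      rw [Iq_inner_const q γ hq0 h1 hy, Iq_inner_const q γ hq0 h1 (mul_pos hq0 hy),
        sub_self, zero_div]
  simp only [DbiHilfer]
  exact Iq_zero _ _ _ _ (hinner x hx) fun m => hinner _ (mul_pos hx (pow_pos hq0 m))
end
end
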